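/- arXiv:math/9712287 — 3 statements merged into one kernel-verified Lean document; each statement's English description precedes it below -/
import Mathlib

section
/- If κ is a cardinal with ℵ₁ ≤ κ < 2^ℵ₀, then the set of injective functions from κ into [0,1] is of second category (i.e., non-meager) in the box product topology on the product of κ copies of [0,1]. -/
/-- The box product topology on `Π (ι) [0,1]`: generated by products of open sets. -/
def boxTopology (ι : Type*) : TopologicalSpace (ι → Set.Icc (0:ℝ) 1) :=
  TopologicalSpace.generateFrom
    {S | ∃ U : ι → Set (Set.Icc (0:ℝ) 1), (∀ i, IsOpen (U i)) ∧ S = Set.pi Set.univ U}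

/-!
If the injective points were meagre, some dense open sets `U₀, U₁, …` of the box topology would
have no injective point in common. Along every branch `z` of the binary tree we build nested boxes
of closed dyadic intervals, the `(n+1)`-st one inside `Uₙ`, so each branch yields a point `x_z` of
`⋂ Uₙ`. Fix an injective code `e : ι → (ℕ → Bool)`. At level `n + 1` the binary address of
coordinate `i` is extended by the branch bit `z n` followed by the first `n` bits of `e i`. If
`e i` and `e j` first differ at `m`, two branches splitting at a level `n > m` cannot both keep
the `i`- and `j`-intervals overlapping, since the addresses of `i` and `j` would have to be
comparable with both values of the branch bit. Hence `x_z i = x_z j` for only finitely many `z`,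
and as there are fewer than `𝔠` pairs `(i, j)`, some branch gives an injective point.
-/

open Set Topology TopologicalSpace

namespace BoxProduct

lemma exists_seq_isOpen_dense_of_isMeagre {X : Type*} [TopologicalSpace X] {s : Set X}
    (hs : IsMeagre s) :
    ∃ U : ℕ → Set X, (∀ n, IsOpen (U n)) ∧ (∀ n, Dense (U n)) ∧ ⋂ n, U n ⊆ sᶜ := by
  obtain ⟨S, hSo, hSd, hSc, hS⟩ := mem_residual_iff.1 hs
  obtain ⟨U, hU⟩ := (hSc.insert univ).exists_eq_range (insert_nonempty _ _)
  have hmem : ∀ n, U n ∈ insert univ S := fun n => hU ▸ mem_range_self n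
  refine ⟨U, fun n => (hmem n).elim (fun h => h ▸ isOpen_univ) (hSo _),
    fun n => (hmem n).elim (fun h => h ▸ dense_univ) (hSd _), ?_⟩
  refine (subset_sInter fun t ht => ?_).trans hS
  obtain ⟨n, rfl⟩ : t ∈ range U := hU ▸ mem_insert_of_mem _ ht
  exact iInter_subset _ n

lemma isTopologicalBasis_boxTopology (ι : Type*) :
    @IsTopologicalBasis _ (boxTopology ι)
      {S | ∃ U : ι → Set (Icc (0 : ℝ) 1), (∀ i, IsOpen (U i)) ∧ S = pi univ U} := by
  let _ := boxTopology ι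
  refine ⟨?_, ?_, rfl⟩
  · rintro _ ⟨U, hU, rfl⟩ _ ⟨V, hV, rfl⟩ x hx
    exact ⟨_, ⟨fun i => U i ∩ V i, fun i => (hU i).inter (hV i), rfl⟩, by rwa [pi_inter_distrib],
      pi_inter_distrib.subset⟩
  · exact sUnion_eq_univ_iff.2 fun x =>
      ⟨univ, ⟨fun _ => univ, fun _ => isOpen_univ, by simp⟩, trivial⟩

/-- The affine map sending the closed dyadic interval with binary address `s` onto `[0,1]`. -/
noncomputable def dyadicRescale : List Bool → ℝ → ℝ
  | [] => id
  | b :: s => fun x => dyadicRescale s (2 * x - b.toNat)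

def dyadicInterval (s : List Bool) : Set ℝ := dyadicRescale s ⁻¹' Icc 0 1

/-- Unlike the dyadic intervals themselves, middle halves of dyadic intervals with
prefix-incomparable addresses are disjoint. -/
def middleHalf (s : List Bool) : Set ℝ := dyadicRescale s ⁻¹' Icc (1 / 4) (3 / 4)

lemma dyadicRescale_append (s t : List Bool) :
    dyadicRescale (s ++ t) = dyadicRescale t ∘ dyadicRescale s := by
  induction s with
  | nil => rfl
  | cons b s ih => funext x; exact congrFun ih _

lemma dyadicRescale_sub (s : List Bool) (x y : ℝ) :
    dyadicRescale s x - dyadicRescale s y = 2 ^ s.length * (x - y) := by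
  induction s generalizing x y with
  | nil => simp [dyadicRescale]
  | cons b s ih => simp only [dyadicRescale, ih, List.length_cons]; ring

lemma continuous_dyadicRescale (s : List Bool) : Continuous (dyadicRescale s) := by
  induction s with
  | nil => exact continuous_id
  | cons b s ih => exact ih.comp (by fun_prop)

lemma dyadicRescale_surjective (s : List Bool) : Function.Surjective (dyadicRescale s) := by
  induction s with
  | nil => exact Function.surjective_id
  | cons b s ih =>
    intro y
    obtain ⟨x, rfl⟩ := ih y
    exact ⟨(x + b.toNat) / 2, by simp only [dyadicRescale]; ring_nf⟩

lemma preimage_dyadicRescale_subset {A : Set ℝ}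
    (hA : ∀ (b : Bool) (x : ℝ), 2 * x - b.toNat ∈ A → x ∈ A) (s : List Bool) :
    dyadicRescale s ⁻¹' A ⊆ A := by
  induction s with
  | nil => exact subset_rfl
  | cons b s ih => exact fun x hx => hA b x (ih hx)

lemma toNat_mem_Icc (b : Bool) : (b.toNat : ℝ) ∈ Icc 0 1 := by
  cases b <;> simp

lemma dyadicInterval_subset_Icc (s : List Bool) : dyadicInterval s ⊆ Icc 0 1 :=
  preimage_dyadicRescale_subset (A := Icc 0 1) (s := s) fun b x hx =>
    ⟨by linarith [hx.1, (toNat_mem_Icc b).1], by linarith [hx.2, (toNat_mem_Icc b).2]⟩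

lemma middleHalf_subset_Ioo (s : List Bool) : middleHalf s ⊆ Ioo 0 1 :=
  (preimage_mono (Icc_subset_Ioo (by norm_num) (by norm_num))).trans <|
    preimage_dyadicRescale_subset (A := Ioo 0 1) (s := s) fun b x hx =>
      ⟨by linarith [hx.1, (toNat_mem_Icc b).1], by linarith [hx.2, (toNat_mem_Icc b).2]⟩

lemma middleHalf_subset_dyadicInterval (s : List Bool) : middleHalf s ⊆ dyadicInterval s :=
  preimage_mono (Icc_subset_Icc (by norm_num) (by norm_num))

lemma dyadicInterval_append_subset (s t : List Bool) :
    dyadicInterval (s ++ t) ⊆ dyadicInterval s := by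
  rw [dyadicInterval, dyadicRescale_append, preimage_comp]
  exact preimage_mono (dyadicInterval_subset_Icc t)

lemma middleHalf_nonempty (s : List Bool) : (middleHalf s).Nonempty :=
  (nonempty_Icc.2 (by norm_num)).preimage (dyadicRescale_surjective s)

lemma isClosed_middleHalf (s : List Bool) : IsClosed (middleHalf s) :=
  isClosed_Icc.preimage (continuous_dyadicRescale s)

lemma isCompact_middleHalf (s : List Bool) : IsCompact (middleHalf s) :=
  isCompact_Icc.of_isClosed_subset (isClosed_middleHalf s)
    ((middleHalf_subset_Ioo s).trans Ioo_subset_Icc_self)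

lemma abs_sub_le_of_mem_dyadicInterval {s : List Bool} {x y : ℝ} (hx : x ∈ dyadicInterval s)
    (hy : y ∈ dyadicInterval s) : |x - y| ≤ 2⁻¹ ^ s.length := by
  have h := abs_sub_le_of_le_of_le hx.1 hx.2 hy.1 hy.2
  rw [sub_zero, dyadicRescale_sub, abs_mul, abs_of_pos (by positivity)] at h
  rw [inv_pow, ← one_div, le_div_iff₀ (by positivity)]
  linarith

lemma exists_mem_dyadicInterval (n : ℕ) {t : ℝ} (ht : t ∈ Icc (0 : ℝ) 1) :
    ∃ s : List Bool, s.length = n ∧ t ∈ dyadicInterval s := by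
  induction n generalizing t with
  | zero => exact ⟨[], rfl, ht⟩
  | succ n ih =>
    obtain ⟨b, hb⟩ : ∃ b : Bool, 2 * t - b.toNat ∈ Icc (0 : ℝ) 1 := by
      by_cases h : t ≤ 1 / 2
      · refine ⟨false, ?_⟩
        simp only [Bool.toNat_false, Nat.cast_zero, sub_zero]
        exact ⟨by linarith [ht.1], by linarith⟩
      · refine ⟨true, ?_⟩
        simp only [Bool.toNat_true, Nat.cast_one]
        exact ⟨by linarith, by linarith [ht.2]⟩
    obtain ⟨s, hs, hts⟩ := ih hb
    exact ⟨b :: s, by simp [hs], hts⟩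

lemma exists_dyadicInterval_subset {R : Set ℝ} (hR : IsOpen R) {t : ℝ} (htR : t ∈ R)
    (ht : t ∈ Icc (0 : ℝ) 1) : ∃ s : List Bool, dyadicInterval s ⊆ R := by
  obtain ⟨ε, hε, hball⟩ := Metric.isOpen_iff.1 hR t htR
  obtain ⟨n, hn⟩ := exists_pow_lt_of_lt_one hε (by norm_num : (2⁻¹ : ℝ) < 1)
  obtain ⟨s, rfl, hts⟩ := exists_mem_dyadicInterval n ht
  exact ⟨s, fun x hx => hball ((abs_sub_le_of_mem_dyadicInterval hx hts).trans_lt hn)⟩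

lemma exists_dyadicInterval_pi_subset {ι : Type*} {U : Set (ι → Icc (0 : ℝ) 1)}
    (hU : IsOpen[boxTopology ι] U) (hd : @Dense _ (boxTopology ι) U) {O : ι → Set ℝ}
    (hO : ∀ i, IsOpen (O i)) (hne : ∀ i, (O i ∩ Icc 0 1).Nonempty) :
    ∃ D : ι → List Bool, (∀ i, dyadicInterval (D i) ⊆ O i) ∧
      ∀ x : ι → Icc (0 : ℝ) 1, (∀ i, (x i : ℝ) ∈ dyadicInterval (D i)) → x ∈ U := by
  let _ := boxTopology ι
  have hB := isTopologicalBasis_boxTopology ι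
  set W := pi univ fun i => ((↑) : Icc (0 : ℝ) 1 → ℝ) ⁻¹' O i
  have hW : IsOpen W := hB.isOpen ⟨_, fun i => (hO i).preimage continuous_subtype_val, rfl⟩
  have hWne : W.Nonempty :=
    ⟨fun i => ⟨_, (hne i).some_mem.2⟩, fun i _ => (hne i).some_mem.1⟩
  obtain ⟨y, hyW, hyU⟩ := hd.inter_open_nonempty W hW hWne
  obtain ⟨_, ⟨V, hV, rfl⟩, hyV, hVsub⟩ :=
    hB.exists_subset_of_mem_open (u := U ∩ W) ⟨hyU, hyW⟩ (hU.inter hW)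
  choose G hG hGV using fun i => isOpen_induced_iff.1 (hV i)
  have hyGO : ∀ i, (y i : ℝ) ∈ G i ∩ O i := fun i =>
    ⟨by simpa [← hGV i] using hyV i (mem_univ i), hyW i (mem_univ i)⟩
  choose D hD using fun i => exists_dyadicInterval_subset ((hG i).inter (hO i)) (hyGO i) (y i).2
  refine ⟨D, fun i => (hD i).trans inter_subset_right, fun x hx => (hVsub fun i _ => ?_).1⟩
  rw [← hGV i]
  exact (hD i (hx i)).1

def PrefixComparable {α : Type*} (s t : List α) : Prop := s <+: t ∨ t <+: s

namespace PrefixComparable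

variable {α : Type*} {s t : List α}

lemma symm (h : PrefixComparable s t) : PrefixComparable t s :=
  Or.symm h

lemma getElem_eq (h : PrefixComparable s t) {k : ℕ} (hs : k < s.length) (ht : k < t.length) :
    s[k] = t[k] :=
  h.elim (fun h => h.getElem hs) (fun h => (h.getElem ht).symm)

lemma cons (a : α) (h : PrefixComparable s t) : PrefixComparable (a :: s) (a :: t) := by
  simpa [PrefixComparable] using h

lemma false_of_length_lt {D D' w w' u u' : List α} {b b' : α} (hb : b ≠ b')
    (hlt : D.length < D'.length) (h : PrefixComparable (D ++ b :: w) (D' ++ u))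
    (h' : PrefixComparable (D ++ b' :: w') (D' ++ u')) : False := by
  have e := h.getElem_eq (k := D.length) (by simp) (by simp; omega)
  have e' := h'.getElem_eq (k := D.length) (by simp) (by simp; omega)
  simp only [List.getElem_append_right le_rfl, List.getElem_append_left hlt, Nat.sub_self,
    List.getElem_cons_zero] at e e'
  exact hb (e.trans e'.symm)

lemma tail_eq {D D' w w' : List α} {b b' : α} (hb : b ≠ b') (hlen : w.length = w'.length)
    (h : PrefixComparable (D ++ b :: w) (D' ++ b :: w'))
    (h' : PrefixComparable (D ++ b' :: w) (D' ++ b' :: w')) : w = w' := by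
  rcases lt_trichotomy D.length D'.length with hlt | heq | hgt
  · exact (false_of_length_lt hb hlt h h').elim
  · have hlen' : (D ++ b :: w).length = (D' ++ b :: w').length := by simp [heq, hlen]
    have hDw := h.elim (fun h => h.eq_of_length hlen') (fun h => (h.eq_of_length hlen'.symm).symm)
    exact List.cons_injective (List.append_inj hDw heq).2
  · exact (false_of_length_lt hb hgt h.symm h'.symm).elim

end PrefixComparable

lemma prefixComparable_of_middleHalf_inter {s t : List Bool}
    (h : (middleHalf s ∩ middleHalf t).Nonempty) : PrefixComparable s t := by
  induction s generalizing t with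
  | nil => exact Or.inl List.nil_prefix
  | cons a s ih =>
    cases t with
    | nil => exact Or.inr List.nil_prefix
    | cons c t =>
      obtain ⟨x, hxs, hxt⟩ := h
      obtain rfl | hac := eq_or_ne a c
      · exact (ih ⟨_, hxs, hxt⟩).cons a
      · have h₁ := middleHalf_subset_Ioo s hxs
        have h₂ := middleHalf_subset_Ioo t hxt
        cases a <;> cases c <;>
          simp only [mem_Ioo, Bool.toNat_false, Bool.toNat_true, Nat.cast_zero, Nat.cast_one]
            at h₁ h₂ <;>
          first | exact absurd rfl hac | linarith [h₁.1, h₁.2, h₂.1, h₂.2]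

section Branch

/- `next n p` refines the box of dyadic intervals with addresses `p` at level `n`; in the
application it is chosen inside `Uₙ`. -/
variable {ι : Type*} (next : ℕ → (ι → List Bool) → ι → List Bool) (e : ι → ℕ → Bool)

def branchAddress (z : ℕ → Bool) : ℕ → ι → List Bool
  | 0 => fun _ => []
  | n + 1 => fun i => next n (branchAddress z n) i ++ z n :: List.ofFn (fun k : Fin n => e i k)

lemma branchAddress_congr {z w : ℕ → Bool} {n : ℕ} (h : ∀ k < n, z k = w k) :
    branchAddress next e z n = branchAddress next e w n := by
  induction n with
  | zero => rfl
  | succ n ih => simp only [branchAddress, ih fun k hk => h k (by omega), h n (by omega)]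

lemma middleHalf_branchAddress_succ_subset (z : ℕ → Bool) (n : ℕ) (i : ι) :
    middleHalf (branchAddress next e z (n + 1) i) ⊆
      dyadicInterval (next n (branchAddress next e z n) i) :=
  (middleHalf_subset_dyadicInterval _).trans (dyadicInterval_append_subset _ _)

lemma eq_of_forall_middleHalf_branchAddress_inter {i j : ι} {m : ℕ} (hm : e i m ≠ e j m)
    {z w : ℕ → Bool}
    (hz : ∀ n, (middleHalf (branchAddress next e z n i) ∩
      middleHalf (branchAddress next e z n j)).Nonempty)
    (hw : ∀ n, (middleHalf (branchAddress next e w n i) ∩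
      middleHalf (branchAddress next e w n j)).Nonempty)
    (hzw : ∀ k ≤ m, z k = w k) : z = w := by
  by_contra hne
  have hex : ∃ n, z n ≠ w n := Function.ne_iff.1 hne
  set n := Nat.find hex
  have hmn : m < n := by
    by_contra! h
    exact Nat.find_spec hex (hzw n h)
  have hpre := branchAddress_congr next e (n := n) fun k hk => not_not.1 (Nat.find_min hex hk)
  have hz' := prefixComparable_of_middleHalf_inter (hz (n + 1))
  have hw' := prefixComparable_of_middleHalf_inter (hw (n + 1))
  simp only [branchAddress, hpre] at hz' hw'
  have h := PrefixComparable.tail_eq (Nat.find_spec hex) (by simp) hz' hw'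
  exact hm (congrFun (List.ofFn_injective h) ⟨m, hmn⟩)

lemma finite_setOf_forall_middleHalf_branchAddress_inter {i j : ι} (he : e i ≠ e j) :
    {z | ∀ n, (middleHalf (branchAddress next e z n i) ∩
      middleHalf (branchAddress next e z n j)).Nonempty}.Finite := by
  obtain ⟨m, hm⟩ := Function.ne_iff.1 he
  refine Set.Finite.of_finite_image (f := fun z (k : Fin (m + 1)) => z k) (Set.toFinite _) ?_
  intro z hz w hw hzw
  exact eq_of_forall_middleHalf_branchAddress_inter next e hm hz hw
    fun k hk => congrFun hzw ⟨k, by omega⟩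

variable {next}

lemma exists_forall_mem_middleHalf_branchAddress
    (hnext : ∀ n p i, dyadicInterval (next n p i) ⊆ middleHalf (p i)) (z : ℕ → Bool) (i : ι) :
    ∃ v, ∀ n, v ∈ middleHalf (branchAddress next e z n i) := by
  obtain ⟨v, hv⟩ := IsCompact.nonempty_iInter_of_sequence_nonempty_isCompact_isClosed
    (fun n => middleHalf (branchAddress next e z n i))
    (fun n => (middleHalf_branchAddress_succ_subset next e z n i).trans (hnext _ _ i))
    (fun n => middleHalf_nonempty _) (isCompact_middleHalf _) (fun n => isClosed_middleHalf _)
  exact ⟨v, mem_iInter.1 hv⟩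

end Branch

section Cardinality

open Cardinal

universe u

lemma exists_forall_notMem_of_countable {α κ : Type u} {s : κ → Set α} (hs : ∀ k, (s k).Countable)
    (hκ : #κ < #α) (hα : ℵ₀ < #α) : ∃ a, ∀ k, a ∉ s k := by
  have hunion : #(⋃ k, s k) < #α := (mk_iUnion_le s).trans_lt
    (mul_lt_of_lt hα.le hκ ((ciSup_le' fun k => (hs k).le_aleph0).trans_lt hα))
  by_contra! h
  rw [eq_univ_of_forall fun a => mem_iUnion.2 (h a), mk_univ] at hunion
  exact hunion.false

theorem exists_injective_forall_mem_dyadicInterval {ι : Type} (hι : #ι < 𝔠)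
    {next : ℕ → (ι → List Bool) → ι → List Bool}
    (hnext : ∀ n p i, dyadicInterval (next n p i) ⊆ middleHalf (p i)) :
    ∃ x : ι → Icc (0 : ℝ) 1, Function.Injective x ∧
      ∃ p : ℕ → ι → List Bool, ∀ n i, (x i : ℝ) ∈ dyadicInterval (next n (p n) i) := by
  obtain ⟨e⟩ : Nonempty (ι ↪ (ℕ → Bool)) := (le_def _ _).1 (by simpa using hι.le)
  obtain ⟨z, hz⟩ := exists_forall_notMem_of_countable (κ := ι × ι)
    (s := fun q => {z | q.1 ≠ q.2 ∧ ∀ n, (middleHalf (branchAddress next e z n q.1) ∩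
      middleHalf (branchAddress next e z n q.2)).Nonempty})
    (fun q => by
      by_cases h : q.1 = q.2
      · simp [h]
      · exact (finite_setOf_forall_middleHalf_branchAddress_inter next e
          (e.injective.ne h)).countable.mono fun z hz => hz.2)
    (by simpa using mul_lt_of_lt aleph0_le_continuum hι hι) (by simpa using aleph0_lt_continuum)
  choose v hv using exists_forall_mem_middleHalf_branchAddress e hnext z
  refine ⟨fun i => ⟨v i, Ioo_subset_Icc_self (middleHalf_subset_Ioo _ (hv i 0))⟩, ?_,
    branchAddress next e z, fun n i => middleHalf_branchAddress_succ_subset _ _ _ _ _ (hv i _)⟩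
  intro i j hij
  by_contra hne
  refine hz (i, j) ⟨hne, fun n => ⟨v i, hv i n, ?_⟩⟩
  rw [show v i = v j from congrArg Subtype.val hij]
  exact hv j n

theorem exists_injective_forall_mem {ι : Type} (hι : #ι < 𝔠) (U : ℕ → Set (ι → Icc (0 : ℝ) 1))
    (hU : ∀ n, IsOpen[boxTopology ι] (U n)) (hd : ∀ n, @Dense _ (boxTopology ι) (U n)) :
    ∃ x : ι → Icc (0 : ℝ) 1, Function.Injective x ∧ ∀ n, x ∈ U n := by
  have hO : ∀ (p : ι → List Bool) i,
      (dyadicRescale (p i) ⁻¹' Ioo (1 / 4) (3 / 4) ∩ Icc 0 1).Nonempty := fun p i => by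
    obtain ⟨y, hy⟩ := (nonempty_Ioo.2 (by norm_num : (1 / 4 : ℝ) < 3 / 4)).preimage
      (dyadicRescale_surjective (p i))
    exact ⟨y, hy,
      Ioo_subset_Icc_self (middleHalf_subset_Ioo _ (preimage_mono Ioo_subset_Icc_self hy))⟩
  choose next hnext hnextU using fun n (p : ι → List Bool) =>
    exists_dyadicInterval_pi_subset (hU n) (hd n)
      (fun i => isOpen_Ioo.preimage (continuous_dyadicRescale (p i))) (hO p)
  obtain ⟨x, hx, p, hp⟩ := exists_injective_forall_mem_dyadicInterval hι
    fun n q i => (hnext n q i).trans (preimage_mono Ioo_subset_Icc_self)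
  exact ⟨x, hx, fun n => hnextU n (p n) x (hp n)⟩

end Cardinality

end BoxProduct

theorem stmt0_general {ι : Type}
    (h2 : Cardinal.mk ι < Cardinal.continuum) :
    ¬ @IsMeagre _ (boxTopology ι)
        {x : ι → Set.Icc (0:ℝ) 1 | Function.Injective x} := by
  let _ := boxTopology ι
  intro hM
  obtain ⟨U, hU, hd, hsub⟩ := BoxProduct.exists_seq_isOpen_dense_of_isMeagre hM
  obtain ⟨x, hx, hxU⟩ := BoxProduct.exists_injective_forall_mem h2 U hU hd
  exact hsub (mem_iInter.2 hxU) hx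

/-- If `ℵ₁ ≤ κ < 2^ℵ₀`, the set of injective functions from `κ` into `[0,1]` is
of second category (non-meager) in the box product topology. -/
theorem stmt0 {ι : Type} (h1 : Cardinal.aleph 1 ≤ Cardinal.mk ι)
    (h2 : Cardinal.mk ι < Cardinal.continuum) :
    ¬ @IsMeagre _ (boxTopology ι)
        {x : ι → Set.Icc (0:ℝ) 1 | Function.Injective x} :=
  stmt0_general h2
end

section
/- If κ is a cardinal with ℵ₁ ≤ κ < 2^ℵ₀ and {G_n : n < ω} is a countable family of dense open subsets of the box product Π_{ι<κ}[0,1], then there is an injective function x : κ → [0,1] belonging to ⋂_n G_n. -/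
/-!
Fix an injective code `φ : ι → ℕ → Bool`, which exists since `#ι < 𝔠`. For every branch
`b : ℕ → Bool`, density yields a decreasing sequence of boxes of dyadic intervals, the one at
level `n + 1` inside `G n`: going from level `n` to `n + 1` first shrinks into `G n`, then extends
the binary address of coordinate `i` by the digit `b n` and the first `n` digits of `φ i`. The
coordinates of the resulting point `x_b` lie in the nested intervals, so `x_b ∈ ⋂ n, G n`.

Let `i ≠ j` with `x_b i = x_b j`, and let `m` be a digit where `φ i` and `φ j` differ. At any
level `n > m` the appended codes differ, so the intervals of `i` and `j` can only meet if the
digit `b n` is the one dictated by the level-`n` intervals, which depend on `b` below `n` only.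
Hence `x_b i = x_b j` holds for at most `2 ^ (m + 1)` branches, and as there are fewer than `𝔠`
pairs `(i, j)`, some branch gives an injective `x_b`.
-/

open Set Cardinal

/-- The left end of the dyadic interval with binary address `u`, most significant digit first. -/
noncomputable def dyadicLeft : List Bool → ℝ
  | [] => 0
  | a :: u => ((if a then 1 else 0) + dyadicLeft u) / 2

def dyadicCell (u : List Bool) : Set ℝ := Ioo (dyadicLeft u) (dyadicLeft u + 2⁻¹ ^ u.length)

lemma dyadicLeft_nonneg (u : List Bool) : 0 ≤ dyadicLeft u := by
  induction u with
  | nil => simp [dyadicLeft]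
  | cons a u ih => unfold dyadicLeft; split <;> linarith

lemma dyadicLeft_add_le_one (u : List Bool) : dyadicLeft u + 2⁻¹ ^ u.length ≤ 1 := by
  induction u with
  | nil => simp [dyadicLeft]
  | cons a u ih => simp only [dyadicLeft, List.length_cons, pow_succ]; split <;> linarith

lemma dyadicLeft_append (u v : List Bool) :
    dyadicLeft (u ++ v) = dyadicLeft u + 2⁻¹ ^ u.length * dyadicLeft v := by
  induction u with
  | nil => simp [dyadicLeft]
  | cons a u ih => simp only [List.cons_append, dyadicLeft, ih, List.length_cons, pow_succ]; ring

lemma dyadicCell_subset_Ioo (u : List Bool) : dyadicCell u ⊆ Ioo 0 1 :=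
  Ioo_subset_Ioo (dyadicLeft_nonneg u) (dyadicLeft_add_le_one u)

lemma dyadicCell_append_subset (u v : List Bool) : dyadicCell (u ++ v) ⊆ dyadicCell u := by
  have hpos : (0 : ℝ) < 2⁻¹ ^ u.length := by positivity
  have h₀ := dyadicLeft_nonneg v
  have h₁ := dyadicLeft_add_le_one v
  refine Ioo_subset_Ioo ?_ ?_ <;>
    simp only [dyadicLeft_append, List.length_append, pow_add] <;> nlinarith

lemma dyadicCell_nonempty (u : List Bool) : (dyadicCell u).Nonempty :=
  nonempty_Ioo.2 (lt_add_of_pos_right _ (by positivity))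

lemma closure_dyadicCell (u : List Bool) :
    closure (dyadicCell u) = Icc (dyadicLeft u) (dyadicLeft u + 2⁻¹ ^ u.length) :=
  closure_Ioo (lt_add_of_pos_right _ (by positivity)).ne

lemma mem_dyadicCell_cons {x : ℝ} {a : Bool} {u : List Bool} :
    x ∈ dyadicCell (a :: u) ↔ 2 * x - (if a then 1 else 0) ∈ dyadicCell u := by
  simp only [dyadicCell, mem_Ioo, dyadicLeft, List.length_cons, pow_succ]
  constructor <;> rintro ⟨h₁, h₂⟩ <;> constructor <;> linarith

lemma prefix_or_prefix_of_mem_dyadicCell {u v : List Bool} {x : ℝ}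
    (hu : x ∈ dyadicCell u) (hv : x ∈ dyadicCell v) : u <+: v ∨ v <+: u := by
  induction u generalizing v x with
  | nil => exact .inl List.nil_prefix
  | cons a u ih =>
    cases v with
    | nil => exact .inr List.nil_prefix
    | cons c v =>
      rw [mem_dyadicCell_cons] at hu hv
      have hu' := dyadicCell_subset_Ioo _ hu
      have hv' := dyadicCell_subset_Ioo _ hv
      obtain rfl : a = c := by
        simp only [mem_Ioo] at hu' hv'
        cases a <;> cases c <;> simp at hu' hv' ⊢ <;> linarith
      simpa only [List.cons_prefix_cons, true_and] using ih hu hv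

lemma eq_of_mem_dyadicCell_of_length_eq {u v : List Bool} {x : ℝ} (hlen : u.length = v.length)
    (hu : x ∈ dyadicCell u) (hv : x ∈ dyadicCell v) : u = v :=
  (prefix_or_prefix_of_mem_dyadicCell hu hv).elim (·.eq_of_length hlen)
    (fun h => (h.eq_of_length hlen.symm).symm)

lemma eq_of_mem_dyadicCell_append_cons {P : List Bool} {a c : Bool} {u v : List Bool} {x : ℝ}
    (hu : x ∈ dyadicCell (P ++ a :: u)) (hv : x ∈ dyadicCell (P ++ c :: v)) : a = c := by
  rcases prefix_or_prefix_of_mem_dyadicCell hu hv with h | h <;>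
    simp only [List.prefix_append_right_inj, List.cons_prefix_cons] at h
  exacts [h.1, h.1.symm]

lemma eq_of_mem_dyadicCell_append_cons_of_ne {P Q u v : List Bool} (hlen : u.length = v.length)
    (huv : u ≠ v) {c c' : Bool} {x y : ℝ}
    (hx : x ∈ dyadicCell (P ++ c :: u)) (hx' : x ∈ dyadicCell (Q ++ c :: v))
    (hy : y ∈ dyadicCell (P ++ c' :: u)) (hy' : y ∈ dyadicCell (Q ++ c' :: v)) : c = c' := by
  -- If `P = Q`, the cells through `x` force `u = v`; otherwise the longer of `P`, `Q` continues
  -- the shorter by a digit that `c` and `c'` must both equal.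
  wlog hPQ : P <+: Q generalizing P Q u v
  · refine this hlen.symm huv.symm hx' hx hy' hy ?_
    exact (prefix_or_prefix_of_mem_dyadicCell (dyadicCell_append_subset _ _ hx)
      (dyadicCell_append_subset _ _ hx')).resolve_left hPQ
  obtain ⟨_ | ⟨a, t⟩, rfl⟩ := hPQ
  · rw [List.append_nil] at hx' hy'
    have := eq_of_mem_dyadicCell_of_length_eq (by simp [hlen]) hx hx'
    simp only [List.append_cancel_left_eq, List.cons.injEq, true_and] at this
    exact absurd this huv
  · rw [List.append_assoc, List.cons_append] at hx' hy'
    exact (eq_of_mem_dyadicCell_append_cons hx hx').trans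
      (eq_of_mem_dyadicCell_append_cons hy hy').symm

lemma exists_mem_closure_dyadicCell {x : ℝ} (hx : x ∈ Icc (0 : ℝ) 1) (m : ℕ) :
    ∃ u : List Bool, u.length = m ∧ x ∈ closure (dyadicCell u) := by
  induction m with
  | zero => exact ⟨[], rfl, by simpa [closure_dyadicCell, dyadicLeft] using hx⟩
  | succ m ih =>
    obtain ⟨u, rfl, hxu⟩ := ih
    rw [closure_dyadicCell] at hxu
    by_cases hhalf : x ≤ dyadicLeft u + 2⁻¹ ^ u.length / 2
    · refine ⟨u ++ [false], by simp, ?_⟩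
      simp only [closure_dyadicCell, dyadicLeft_append, dyadicLeft, List.length_append,
        List.length_singleton, pow_succ, mem_Icc] at hxu ⊢
      constructor <;> norm_num <;> linarith [hxu.1]
    · refine ⟨u ++ [true], by simp, ?_⟩
      simp only [closure_dyadicCell, dyadicLeft_append, dyadicLeft, List.length_append,
        List.length_singleton, pow_succ, mem_Icc] at hxu ⊢
      constructor <;> norm_num <;> linarith [hxu.2]

lemma exists_closure_dyadicCell_subset {V : Set ℝ} (hV : IsOpen V) {x : ℝ} (hxV : x ∈ V)
    (hx : x ∈ Icc (0 : ℝ) 1) : ∃ u : List Bool, closure (dyadicCell u) ⊆ V := by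
  obtain ⟨ε, hε, hball⟩ := Metric.isOpen_iff.1 hV x hxV
  obtain ⟨m, hm⟩ := exists_pow_lt_of_lt_one hε (by norm_num : (2⁻¹ : ℝ) < 1)
  obtain ⟨u, rfl, hxu⟩ := exists_mem_closure_dyadicCell hx m
  refine ⟨u, fun y hy => hball ?_⟩
  rw [closure_dyadicCell] at hxu hy
  rw [Metric.mem_ball, Real.dist_eq, abs_sub_lt_iff]
  constructor <;> linarith [hxu.1, hxu.2, hy.1, hy.2]

section BoxTopology

variable {ι : Type*}

lemma isTopologicalBasis_boxTopology :
    @TopologicalSpace.IsTopologicalBasis _ (boxTopology ι)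
      {S | ∃ U : ι → Set (Icc (0:ℝ) 1), (∀ i, IsOpen (U i)) ∧ S = pi univ U} := by
  let _ := boxTopology ι
  refine ⟨?_, ?_, rfl⟩
  · rintro _ ⟨U, hU, rfl⟩ _ ⟨V, hV, rfl⟩ x hx
    exact ⟨_, ⟨fun i => U i ∩ V i, fun i => (hU i).inter (hV i), rfl⟩, by rwa [pi_inter_distrib],
      by rw [pi_inter_distrib]⟩
  · exact sUnion_eq_univ_iff.2 fun x =>
      ⟨univ, ⟨fun _ => univ, fun _ => isOpen_univ, pi_univ _ |>.symm⟩, mem_univ x⟩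

lemma exists_dyadic_refinement_subset {G : Set (ι → Icc (0:ℝ) 1)}
    (hopen : @IsOpen _ (boxTopology ι) G) (hdense : @Dense _ (boxTopology ι) G)
    (C : ι → List Bool) :
    ∃ u : ι → List Bool, (∀ i, closure (dyadicCell (u i)) ⊆ dyadicCell (C i)) ∧
      pi univ (fun i => Subtype.val ⁻¹' dyadicCell (u i)) ⊆ G := by
  let _ := boxTopology ι
  have hbasis := isTopologicalBasis_boxTopology (ι := ι)
  have hbox : IsOpen (pi univ fun i => Subtype.val ⁻¹' dyadicCell (C i)) :=
    hbasis.isOpen ⟨_, fun i => isOpen_Ioo.preimage continuous_subtype_val, rfl⟩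
  obtain ⟨p, hpC, hpG⟩ := hdense.inter_open_nonempty _ hbox <| univ_pi_nonempty_iff.2 fun i =>
    let ⟨x, hx⟩ := dyadicCell_nonempty (C i)
    ⟨⟨x, Ioo_subset_Icc_self (dyadicCell_subset_Ioo _ hx)⟩, hx⟩
  obtain ⟨_, ⟨U, hU, rfl⟩, hpU, hUG⟩ := hbasis.exists_subset_of_mem_open (mem_inter hpC hpG)
    (hbox.inter hopen)
  have hcoord : ∀ i, ∃ u : List Bool, closure (dyadicCell u) ⊆ dyadicCell (C i) ∧
      Subtype.val ⁻¹' dyadicCell u ⊆ U i := by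
    intro i
    obtain ⟨O, hO, hOU⟩ := isOpen_induced_iff.1 (hU i)
    have hpO : (p i : ℝ) ∈ O ∩ dyadicCell (C i) :=
      ⟨by rw [← mem_preimage, hOU]; exact hpU i trivial, hpC i trivial⟩
    obtain ⟨u, hu⟩ := exists_closure_dyadicCell_subset (hO.inter isOpen_Ioo) hpO (p i).2
    refine ⟨u, hu.trans inter_subset_right, ?_⟩
    rw [← hOU]
    exact preimage_mono (subset_closure.trans (hu.trans inter_subset_left))
  choose u hu using hcoord
  exact ⟨u, fun i => (hu i).1, (pi_mono fun i _ => (hu i).2).trans (hUG.trans inter_subset_right)⟩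

end BoxTopology

section BranchPoint

variable {ι : Type*} (R : (ι → List Bool) → ℕ → ι → List Bool) (φ : ι → ℕ → Bool)

/-- The addresses of the dyadic intervals of the box at level `n` along the branch `b`: level
`n + 1` shrinks level `n` by `R`, then appends the digit `b n` and the first `n` digits of the code
`φ i` of the coordinate. -/
def branchCell (b : ℕ → Bool) : ℕ → ι → List Bool
  | 0 => fun _ => []
  | n + 1 => fun i => R (branchCell b n) n i ++ b n :: List.ofFn fun k : Fin n => φ i k

noncomputable def branchPoint (b : ℕ → Bool) (i : ι) : ℝ :=
  Classical.epsilon fun z => ∀ n, z ∈ dyadicCell (branchCell R φ b n i)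

variable {R φ}

def IsDyadicRefinement (R : (ι → List Bool) → ℕ → ι → List Bool) : Prop :=
  ∀ C n i, closure (dyadicCell (R C n i)) ⊆ dyadicCell (C i)

lemma branchCell_congr {b b' : ℕ → Bool} {n : ℕ} (h : ∀ k < n, b k = b' k) :
    branchCell R φ b n = branchCell R φ b' n := by
  induction n with
  | zero => rfl
  | succ n ih =>
    simp only [branchCell, h n n.lt_succ_self, ih fun k hk => h k (hk.trans n.lt_succ_self)]

lemma closure_dyadicCell_branchCell_succ_subset (hR : IsDyadicRefinement R) (b : ℕ → Bool)
    (n : ℕ) (i : ι) :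
    closure (dyadicCell (branchCell R φ b (n + 1) i)) ⊆ dyadicCell (branchCell R φ b n i) :=
  (closure_mono (dyadicCell_append_subset _ _)).trans (hR _ n i)

lemma branchPoint_mem_dyadicCell (hR : IsDyadicRefinement R) (b : ℕ → Bool) (i : ι) (n : ℕ) :
    branchPoint R φ b i ∈ dyadicCell (branchCell R φ b n i) := by
  refine Classical.epsilon_spec (p := fun z => ∀ n, z ∈ dyadicCell (branchCell R φ b n i)) ?_ n
  obtain ⟨z, hz⟩ := IsCompact.nonempty_iInter_of_sequence_nonempty_isCompact_isClosed
    (fun n => closure (dyadicCell (branchCell R φ b n i)))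
    (fun n => (closure_dyadicCell_branchCell_succ_subset hR b n i).trans subset_closure)
    (fun n => (dyadicCell_nonempty _).closure)
    (by rw [closure_dyadicCell]; exact isCompact_Icc) (fun _ => isClosed_closure)
  exact ⟨z, fun n => closure_dyadicCell_branchCell_succ_subset hR b n i (mem_iInter.1 hz (n + 1))⟩

lemma branchPoint_mem_dyadicCell_refinement (hR : IsDyadicRefinement R) (b : ℕ → Bool) (i : ι)
    (n : ℕ) :
    branchPoint R φ b i ∈ dyadicCell (R (branchCell R φ b n) n i) :=
  dyadicCell_append_subset _ _ (branchPoint_mem_dyadicCell hR b i (n + 1))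

lemma eq_of_branchPoint_eq (hR : IsDyadicRefinement R) {i j : ι} {m : ℕ} (hm : φ i m ≠ φ j m)
    {b b' : ℕ → Bool} (hb : branchPoint R φ b i = branchPoint R φ b j)
    (hb' : branchPoint R φ b' i = branchPoint R φ b' j) (h : ∀ k ≤ m, b k = b' k) : b = b' := by
  funext n
  induction n using Nat.strong_induction_on with
  | _ n ih =>
  rcases le_or_gt n m with hnm | hmn
  · exact h n hnm
  have hcode : (List.ofFn fun k : Fin n => φ i k) ≠ List.ofFn fun k : Fin n => φ j k :=
    fun h => hm (congrFun (List.ofFn_inj.1 h) ⟨m, hmn⟩)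
  have hmem (c : ℕ → Bool) (l : ι) : branchPoint R φ c l ∈
      dyadicCell (R (branchCell R φ c n) n l ++ c n :: List.ofFn fun k : Fin n => φ l k) :=
    branchPoint_mem_dyadicCell hR c l (n + 1)
  have hcell : branchCell R φ b' n = branchCell R φ b n := (branchCell_congr ih).symm
  have hb'i := hmem b' i
  have hb'j := hmem b' j
  rw [hcell] at hb'i hb'j
  exact eq_of_mem_dyadicCell_append_cons_of_ne (by simp) hcode (hmem b i) (hb ▸ hmem b j)
    hb'i (hb' ▸ hb'j)

lemma countable_setOf_branchPoint_eq (hR : IsDyadicRefinement R) {i j : ι} (hij : φ i ≠ φ j) :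
    {b | branchPoint R φ b i = branchPoint R φ b j}.Countable := by
  obtain ⟨m, hm⟩ := Function.ne_iff.1 hij
  refine (mapsTo_univ (fun b (k : Fin (m + 1)) => b k) _).countable_of_injOn ?_ countable_univ
  intro b hb b' hb' h
  exact eq_of_branchPoint_eq hR hm hb hb' fun k hk => congrFun h ⟨k, Nat.lt_succ_of_le hk⟩

end BranchPoint

universe u

lemma exists_forall_notMem_of_mk_lt_continuum {α β : Type u} (hα : #α < 𝔠) (hβ : #β = 𝔠)
    {s : α → Set β} (hs : ∀ a, (s a).Countable) : ∃ b, ∀ a, b ∉ s a := by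
  by_contra! h
  have hcover : ⋃ a, s a = Set.univ := eq_univ_of_forall fun b => mem_iUnion.2 (h b)
  refine lt_irrefl 𝔠 ?_
  calc 𝔠 = #(⋃ a, s a) := by rw [hcover, mk_univ, hβ]
    _ ≤ #α * ⨆ a, #(s a) := mk_iUnion_le s
    _ ≤ #α * ℵ₀ := by gcongr; exact ciSup_le' fun a => (hs a).le_aleph0
    _ < 𝔠 := mul_lt_of_lt aleph0_le_continuum hα aleph0_lt_continuum

lemma exists_injective_branchPoint {ι : Type} {R : (ι → List Bool) → ℕ → ι → List Bool}
    {φ : ι → ℕ → Bool} (hR : IsDyadicRefinement R) (hφ : φ.Injective) (hι : #ι < 𝔠) :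
    ∃ b, (branchPoint R φ b).Injective := by
  have hpairs : #{q : ι × ι // q.1 ≠ q.2} < 𝔠 :=
    (mk_subtype_le _).trans_lt <| by
      simpa using mul_lt_of_lt aleph0_le_continuum hι hι
  obtain ⟨b, hb⟩ := exists_forall_notMem_of_mk_lt_continuum hpairs (by simp)
    fun q => countable_setOf_branchPoint_eq hR (hφ.ne q.2)
  exact ⟨b, fun i j h => by_contra fun hij => hb ⟨(i, j), hij⟩ h⟩

theorem stmt1_general {ι : Type}
    (h2 : Cardinal.mk ι < Cardinal.continuum)
    (G : ℕ → Set (ι → Set.Icc (0:ℝ) 1))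
    (hopen : ∀ n, @IsOpen _ (boxTopology ι) (G n))
    (hdense : ∀ n, @Dense _ (boxTopology ι) (G n)) :
    ∃ x : ι → Set.Icc (0:ℝ) 1, Function.Injective x ∧ ∀ n, x ∈ G n := by
  obtain ⟨φ⟩ : Nonempty (ι ↪ (ℕ → Bool)) := Cardinal.le_def _ _ |>.1 (by simpa using h2.le)
  choose R hR hRG using fun C n => exists_dyadic_refinement_subset (hopen n) (hdense n) C
  obtain ⟨b, hb⟩ := exists_injective_branchPoint hR φ.injective h2
  refine ⟨fun i => ⟨branchPoint R φ b i, Ioo_subset_Icc_self <|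
      dyadicCell_subset_Ioo _ (branchPoint_mem_dyadicCell hR b i 0)⟩,
    fun i j h => hb (congrArg Subtype.val h),
    fun n => hRG _ n fun i _ => branchPoint_mem_dyadicCell_refinement hR b i n⟩

/-- If `ℵ₁ ≤ κ < 2^ℵ₀` and the `G n` are dense open in the box product topology on
`Π (κ) [0,1]`, then some injective function lies in `⋂ n, G n`. -/
theorem stmt1 {ι : Type} (h1 : Cardinal.aleph 1 ≤ Cardinal.mk ι)
    (h2 : Cardinal.mk ι < Cardinal.continuum)
    (G : ℕ → Set (ι → Set.Icc (0:ℝ) 1))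
    (hopen : ∀ n, @IsOpen _ (boxTopology ι) (G n))
    (hdense : ∀ n, @Dense _ (boxTopology ι) (G n)) :
    ∃ x : ι → Set.Icc (0:ℝ) 1, Function.Injective x ∧ ∀ n, x ∈ G n :=
  stmt1_general h2 G hopen hdense
end

section
/- Suppose 2^ℵ₀ is regular and there is an enumeration {r_α : α < 2^ℵ₀} of the real numbers in [0,1] such that for every β < 2^ℵ₀ the set {r_α : α < β} is of first category in [0,1]. Then every countable intersection of dense open sets in the box product Π_{α<2^ℵ₀}[0,1] contains a function that is injective on a closed unbounded subset of 2^ℵ₀. -/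
/-- The ordinals below `2^ℵ₀`. -/
abbrev Theta : Type 1 := {o : Ordinal // o < Cardinal.continuum.ord}

/-- `C` is closed unbounded in `2^ℵ₀`: unbounded, and closed under suprema of
nonempty (bounded below the continuum) subsets. -/
def IsClubTheta (C : Set Theta) : Prop :=
  (∀ a : Theta, ∃ b ∈ C, a < b) ∧
  (∀ s : Set Ordinal, s ⊆ Subtype.val '' C → s.Nonempty →
    ∀ h : sSup s < Cardinal.continuum.ord, (⟨sSup s, h⟩ : Theta) ∈ C)

open Set TopologicalSpace Cardinal

universe u

section BoxProduct

variable {ι X : Type*} [TopologicalSpace X]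

@[reducible]
def piBoxTopology (ι X : Type*) [TopologicalSpace X] : TopologicalSpace (ι → X) :=
  generateFrom {S | ∃ U : ι → Set X, (∀ i, IsOpen (U i)) ∧ S = pi univ U}

theorem isTopologicalBasis_piBoxTopology :
    @IsTopologicalBasis _ (piBoxTopology ι X)
      {S | ∃ U : ι → Set X, (∀ i, IsOpen (U i)) ∧ S = pi univ U} := by
  let := piBoxTopology ι X
  refine ⟨?_, sUnion_eq_univ_iff.2 fun _ =>
    ⟨univ, ⟨fun _ => univ, fun _ => isOpen_univ, (pi_univ _).symm⟩, trivial⟩, rfl⟩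
  rintro _ ⟨U, hU, rfl⟩ _ ⟨V, hV, rfl⟩ x hx
  exact ⟨_, ⟨fun i => U i ∩ V i, fun i => (hU i).inter (hV i), rfl⟩,
    by rwa [pi_inter_distrib], by rw [pi_inter_distrib]⟩

theorem exists_pi_subset_of_dense [RegularSpace X] {G : Set (ι → X)}
    (hGo : @IsOpen _ (piBoxTopology ι X) G) (hGd : @Dense _ (piBoxTopology ι X) G)
    {U : ι → Set X} (hUo : ∀ i, IsOpen (U i)) (hUne : ∀ i, (U i).Nonempty) :
    ∃ V : ι → Set X, (∀ i, IsOpen (V i) ∧ (V i).Nonempty ∧ closure (V i) ⊆ U i) ∧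
      pi univ V ⊆ G := by
  let := piBoxTopology ι X
  have hB := isTopologicalBasis_piBoxTopology (ι := ι) (X := X)
  obtain ⟨y, hyU, hyG⟩ := hGd.inter_open_nonempty _ (hB.isOpen ⟨U, hUo, rfl⟩)
    (univ_pi_nonempty_iff.2 hUne)
  obtain ⟨_, ⟨W, hWo, rfl⟩, hyW, hWG⟩ := hB.exists_subset_of_mem_open hyG hGo
  choose V hVo hyV hVU using fun i => isTopologicalBasis_opens.exists_closure_subset
    (((hWo i).inter (hUo i)).mem_nhds ⟨hyW i trivial, hyU i trivial⟩)
  refine ⟨V, fun i => ⟨hVo i, ⟨y i, hyV i⟩, (hVU i).trans inter_subset_right⟩, ?_⟩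
  exact fun z hz => hWG fun i _ => (hVU i (subset_closure (hz i trivial))).1

theorem exists_forall_mem_forall_apply_mem_of_dense [Nonempty X] [CompactSpace X]
    [RegularSpace X] {G : ℕ → Set (ι → X)} (hGo : ∀ n, @IsOpen _ (piBoxTopology ι X) (G n))
    (hGd : ∀ n, @Dense _ (piBoxTopology ι X) (G n)) {D : ι → ℕ → Set X}
    (hDo : ∀ i n, IsOpen (D i n)) (hDd : ∀ i n, Dense (D i n)) :
    ∃ f : ι → X, (∀ n, f ∈ G n) ∧ ∀ i n, f i ∈ D i n := by
  let Box := {U : ι → Set X // ∀ i, IsOpen (U i) ∧ (U i).Nonempty}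
  have step : ∀ (n : ℕ) (U : Box), ∃ V : Box,
      (∀ i, closure (V.1 i) ⊆ U.1 i ∩ D i n) ∧ pi univ V.1 ⊆ G n := fun n U => by
    obtain ⟨V, hV, hVG⟩ := exists_pi_subset_of_dense (hGo n) (hGd n)
      (fun i => (U.2 i).1.inter (hDo i n))
      (fun i => (hDd i n).inter_open_nonempty _ (U.2 i).1 (U.2 i).2)
    exact ⟨⟨V, fun i => ⟨(hV i).1, (hV i).2.1⟩⟩, fun i => (hV i).2.2, hVG⟩
  choose next hnext_sub hnext_G using step
  let box : ℕ → Box := fun n => Nat.rec ⟨fun _ => univ, fun _ => ⟨isOpen_univ, univ_nonempty⟩⟩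
    next n
  have hK : ∀ i, (⋂ n, closure ((box (n + 1)).1 i)).Nonempty := fun i =>
    IsCompact.nonempty_iInter_of_sequence_nonempty_isCompact_isClosed _
      (fun n => (hnext_sub (n + 1) _ i).trans (inter_subset_left.trans subset_closure))
      (fun n => ((box (n + 1)).2 i).2.closure) isClosed_closure.isCompact
      (fun _ => isClosed_closure)
  choose f hf using hK
  have hfD : ∀ i n, f i ∈ (box n).1 i ∩ D i n := fun i n =>
    hnext_sub n _ i (mem_iInter.1 (hf i) n)
  exact ⟨f, fun n => hnext_G n _ fun i _ => (hfD i (n + 1)).1, fun i n => (hfD i n).2⟩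

theorem exists_forall_mem_forall_apply_notMem_of_isMeagre [Nonempty X] [CompactSpace X]
    [RegularSpace X] {G : ℕ → Set (ι → X)} (hGo : ∀ n, @IsOpen _ (piBoxTopology ι X) (G n))
    (hGd : ∀ n, @Dense _ (piBoxTopology ι X) (G n)) {M : ι → Set X}
    (hM : ∀ i, IsMeagre (M i)) :
    ∃ f : ι → X, (∀ n, f ∈ G n) ∧ ∀ i, f i ∉ M i := by
  have hD : ∀ i, ∃ D : ℕ → Set X,
      (∀ n, IsOpen (D n)) ∧ (∀ n, Dense (D n)) ∧ ⋂ n, D n ⊆ (M i)ᶜ := by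
    intro i
    obtain ⟨t, htM, htG, htd⟩ := mem_residual.1 (hM i)
    obtain ⟨D, hDo, rfl⟩ := htG.eq_iInter_nat
    exact ⟨D, hDo, fun n => htd.mono (iInter_subset _ n), htM⟩
  choose D hDo hDd hDM using hD
  obtain ⟨f, hfG, hfD⟩ := exists_forall_mem_forall_apply_mem_of_dense hGo hGd hDo hDd
  exact ⟨f, hfG, fun i => hDM i (mem_iInter.2 (hfD i))⟩

end BoxProduct

section ClosurePoints

def closurePoints {α : Type*} [LT α] (o : α → α) : Set α := {x | ∀ y < x, o y < x}

theorem injOn_closurePoints {α β : Type*} [LinearOrder α] {f r : α → β} {o : α → α}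
    (hfo : ∀ x, r (o x) = f x) (hfr : ∀ y, ∀ x < y, r x ≠ f y) :
    InjOn f (closurePoints o) := by
  have key : ∀ x, ∀ y ∈ closurePoints o, x < y → f x ≠ f y := fun x y hy hxy =>
    hfo x ▸ hfr y (o x) (hy x hxy)
  intro x hx y hy hxy
  by_contra hne
  rcases lt_or_gt_of_ne hne with h | h
  · exact key x y hy h hxy
  · exact key y x hx h hxy.symm

variable {κ : Cardinal.{u}}

theorem exists_gt_forall_le_lt (hκ : κ.IsRegular)
    (o : {x : Ordinal.{u} // x < κ.ord} → {x : Ordinal.{u} // x < κ.ord})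
    (b : {x : Ordinal.{u} // x < κ.ord}) : ∃ b', b < b' ∧ ∀ β ≤ b, o β < b' := by
  have hsucc : ∀ x < κ.ord, x + 1 < κ.ord := fun x hx =>
    Order.succ_eq_add_one x ▸ (isSuccLimit_ord hκ.aleph0_le).succ_lt hx
  set T : Set Ordinal.{u} := (fun β => max (o β).1 β.1 + 1) '' Iic b
  have hT : ∀ x ∈ T, x < κ.ord := by
    rintro _ ⟨β, -, rfl⟩
    exact hsucc _ (max_lt (o β).2 β.2)
  have hcard : #T < (Ordinal.lift.{u + 1} κ.ord).cof := by
    rw [← Ordinal.lift_cof, hκ.cof_ord]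
    calc #T ≤ #(Iic b) := mk_image_le
      _ ≤ #(Iio (b.1 + 1)) := mk_le_of_injective (f := fun β : Iic b =>
          ⟨β.1.1, show β.1.1 < b.1 + 1 from Order.lt_add_one_iff.2 β.2⟩) fun β γ h => by
            ext; exact congrArg (Subtype.val : Iio (b.1 + 1) → Ordinal) h
      _ = lift (b.1 + 1).card := mk_Iio_ordinal _
      _ < lift κ := lift_lt.2 (lt_ord.1 (hsucc _ b.2))
  have hmax : ∀ β ≤ b, max (o β).1 β.1 < sSup T := fun β hβ =>
    (Order.lt_add_one_iff.2 le_rfl).trans_le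
      (le_csSup ⟨κ.ord, fun x hx => (hT x hx).le⟩ ⟨β, hβ, rfl⟩)
  exact ⟨⟨sSup T, Ordinal.sSup_lt_of_lt_cof hcard hT⟩,
    (le_max_right _ _).trans_lt (hmax b le_rfl), fun β hβ => (le_max_left _ _).trans_lt (hmax β hβ)⟩

theorem exists_mem_closurePoints_gt (hκ : κ.IsRegular) (hκ₀ : ℵ₀ < κ)
    (o : {x : Ordinal.{u} // x < κ.ord} → {x : Ordinal.{u} // x < κ.ord})
    (a : {x : Ordinal.{u} // x < κ.ord}) : ∃ b ∈ closurePoints o, a < b := by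
  choose next hlt hnext using exists_gt_forall_le_lt hκ o
  have hsup : ⨆ n : ℕ, (next^[n] a).1 < κ.ord :=
    Ordinal.lift_iSup_lt_of_lt_cof (by simpa [hκ.cof_ord] using hκ₀) fun n => (next^[n] a).2
  have hle : ∀ n, (next^[n] a).1 ≤ ⨆ n : ℕ, (next^[n] a).1 := Ordinal.le_iSup _
  refine ⟨⟨_, hsup⟩, fun β hβ => ?_, (hlt a).trans_le (hle 1)⟩
  obtain ⟨n, hn⟩ := Ordinal.lt_iSup_iff.1 (show β.1 < _ from hβ)
  have hoβ : o β < next^[n + 1] a := by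
    rw [Function.iterate_succ_apply']
    exact hnext _ β hn.le
  exact hoβ.trans_le (hle (n + 1))

theorem sSup_mem_closurePoints {c : Ordinal.{u}} (o : {x : Ordinal.{u} // x < c} → {x // x < c})
    {s : Set Ordinal.{u}} (hs : s ⊆ Subtype.val '' closurePoints o) (h : sSup s < c) :
    (⟨sSup s, h⟩ : {x // x < c}) ∈ closurePoints o := by
  intro β hβ
  obtain ⟨_, hγs, hβγ⟩ := exists_lt_of_lt_csSup' (show β.1 < sSup s from hβ)
  obtain ⟨γ, hγ, rfl⟩ := hs hγs
  have hbdd : BddAbove s := ⟨c, fun x hx => by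
    obtain ⟨δ, -, rfl⟩ := hs hx
    exact δ.2.le⟩
  exact (hγ β hβγ).trans_le (le_csSup hbdd hγs)

theorem isClubTheta_closurePoints (hreg : continuum.{0}.IsRegular) (o : Theta → Theta) :
    IsClubTheta (closurePoints o) :=
  ⟨exists_mem_closurePoints_gt hreg aleph0_lt_continuum o,
    fun _ hs _ h => sSup_mem_closurePoints o hs h⟩

end ClosurePoints

/-- If `2^ℵ₀` is regular and `r` enumerates `[0,1]` so that every proper initial
segment is of first category, then every countable intersection of dense open sets
in the box product contains a function injective on a club of `2^ℵ₀`. -/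
theorem stmt2
    (hreg : Cardinal.continuum.IsRegular)
    (r : Theta → Set.Icc (0:ℝ) 1)
    (hsurj : Function.Surjective r)
    (hmeager : ∀ b : Theta, IsMeagre {x : Set.Icc (0:ℝ) 1 | ∃ a < b, r a = x})
    (G : ℕ → Set (Theta → Set.Icc (0:ℝ) 1))
    (hopen : ∀ n, @IsOpen _ (boxTopology Theta) (G n))
    (hdense : ∀ n, @Dense _ (boxTopology Theta) (G n)) :
    ∃ f : Theta → Set.Icc (0:ℝ) 1, (∀ n, f ∈ G n) ∧
      ∃ C : Set Theta, IsClubTheta C ∧ Set.InjOn f C := by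
  obtain ⟨f, hfG, hfr⟩ := exists_forall_mem_forall_apply_notMem_of_isMeagre hopen hdense hmeager
  choose o ho using fun b => hsurj (f b)
  have hreg₀ : continuum.{0}.IsRegular :=
    (isRegular_lift_iff (κ := continuum.{0})).1 (by rwa [lift_continuum])
  exact ⟨f, hfG, closurePoints o, isClubTheta_closurePoints hreg₀ o,
    injOn_closurePoints ho fun y x hxy hrf => hfr y ⟨x, hxy, hrf⟩⟩
end
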